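/- Let T be an L²-bounded Calderón–Zygmund operator (kernel size and Hölder smoothness with exponent δ), which is hence of weak type (1,1). Then for every cube Q and 0 < λ < 1, the local mean oscillation satisfies ω_λ(Tf; Q) ≤ C(T, λ, n) Σ_{m=0}^∞ 2^{-mδ} (1/|2^m Q|) ∫_{2^m Q} |f(y)| dy. -/

import Mathlib

/-!
Split `f = f₁ + f₂` with `f₁ = f · 1_S`, `S = 2^(n+2) Q`, and take `c = T f₂ (x₀)`, `x₀` the
center of `Q`, in the infimum defining `ω_λ`. The weak type `(1,1)` bound lets `|T f₁|` exceed
`A ‖f₁‖₁ / (λ |Q|)`, a multiple of the `m = n + 2` term of the series, only on a set of measure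
at most `λ |Q|`. Since `Q` stays far from `Sᶜ`, the Hölder smoothness of `K` in its first
variable bounds `|T f₂ x - T f₂ x₀|` uniformly on `Q`: the part of `f` on the annulus
`2^(m+1) Q \ 2^m Q` contributes a constant times `2^(-(m+1)δ) ⨍_{2^(m+1) Q} |f|`.
Outside the exceptional set, `|T f - c| ≤ |T f₁| + |T f₂ - T f₂ (x₀)|` on `Q` is below the sum of
the two bounds.
-/

open Set MeasureTheory ENNReal

/-- The axis-parallel cube centered at `x₀` with sidelength `ℓ`, in Euclidean space. -/
def cubeC {n : ℕ} (x₀ : EuclideanSpace ℝ (Fin n)) (ℓ : ℝ) : Set (EuclideanSpace ℝ (Fin n)) :=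
  {y | ∀ i, x₀ i - ℓ/2 ≤ y i ∧ y i < x₀ i + ℓ/2}

/-- The non-increasing rearrangement `g^*(t) = inf{s > 0 : |{|g| > s}| ≤ t}`. -/
noncomputable def rearr {n : ℕ} (g : EuclideanSpace ℝ (Fin n) → ℝ) (t : ℝ) : ℝ :=
  sInf {s : ℝ | 0 < s ∧ volume {x | s < |g x|} ≤ ENNReal.ofReal t}

/-- The local mean oscillation `ω_λ(g; Q) = inf_{c ∈ ℝ} ((g − c)χ_Q)^*(λ|Q|)`. -/
noncomputable def oscLam {n : ℕ} (lam : ℝ) (g : EuclideanSpace ℝ (Fin n) → ℝ)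
    (Q : Set (EuclideanSpace ℝ (Fin n))) : ℝ :=
  ⨅ c : ℝ, rearr (Q.indicator fun y => g y - c) (lam * (volume Q).toReal)

open Filter Topology

section Kernel

variable {X : Type*} [MetricSpace X]

structure IsCZKernel (d c δ : ℝ) (K : X → X → ℝ) : Prop where
  abs_le : ∀ x y, x ≠ y → |K x y| ≤ c / dist x y ^ d
  abs_sub_add_abs_sub_le : ∀ x x' y, x ≠ y → x' ≠ y → dist x x' < dist x y / 2 →
    |K x y - K x' y| + |K y x - K y x'| ≤ c * dist x x' ^ δ / dist x y ^ (d + δ)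

lemma continuousAt_of_eventually_abs_sub_le_rpow {F : X → ℝ} {y : X} {C δ : ℝ} (hδ : 0 < δ)
    (h : ∀ᶠ y' in 𝓝 y, |F y' - F y| ≤ C * dist y' y ^ δ) : ContinuousAt F y := by
  have hlim : Tendsto (fun y' => C * dist y' y ^ δ) (𝓝 y) (𝓝 0) := by
    have : Continuous fun y' => C * dist y' y ^ δ :=
      continuous_const.mul ((continuous_id.dist continuous_const).rpow_const
        fun _ => Or.inr hδ.le)
    simpa [Real.zero_rpow hδ.ne'] using this.tendsto y
  rw [ContinuousAt, tendsto_iff_dist_tendsto_zero]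
  exact squeeze_zero' (Eventually.of_forall fun _ => dist_nonneg)
    (by simpa only [Real.dist_eq] using h) hlim

namespace IsCZKernel

variable {d c δ : ℝ} {K : X → X → ℝ}

/-- `K` comes with no measurability assumption: this continuity is what makes
`y ↦ K x y * f y` measurable away from `x`. -/
lemma continuousOn (hK : IsCZKernel d c δ K) (hδ : 0 < δ) (x : X) :
    ContinuousOn (K x) {x}ᶜ := by
  refine continuousOn_of_forall_continuousAt fun y (hy : y ≠ x) => ?_
  refine continuousAt_of_eventually_abs_sub_le_rpow (C := c / dist y x ^ (d + δ)) hδ ?_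
  filter_upwards [Metric.ball_mem_nhds y (half_pos (dist_pos.2 hy))] with y' hy'
  rw [Metric.mem_ball] at hy'
  have hy'x : y' ≠ x := by
    rintro rfl
    linarith [dist_comm y y', dist_nonneg (x := y) (y := y')]
  have h := hK.abs_sub_add_abs_sub_le y y' x hy hy'x (by rwa [dist_comm] at hy')
  calc |K x y' - K x y| = |K x y - K x y'| := abs_sub_comm _ _
    _ ≤ c * dist y y' ^ δ / dist y x ^ (d + δ) := by linarith [abs_nonneg (K y x - K y' x)]
    _ = c / dist y x ^ (d + δ) * dist y' y ^ δ := by rw [dist_comm y y']; ring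

variable [MeasurableSpace X] [OpensMeasurableSpace X] {μ : Measure X}

lemma integrableOn_compl_mul (hK : IsCZKernel d c δ K) (hc : 0 ≤ c) (hd : 0 ≤ d) (hδ : 0 < δ)
    {S : Set X} (hS : MeasurableSet S) {x : X} {r : ℝ} (hr : 0 < r)
    (hSr : ∀ y ∉ S, r ≤ dist x y) {f : X → ℝ} (hf : Integrable f μ) :
    IntegrableOn (fun y => K x y * f y) Sᶜ μ := by
  have hxS : x ∈ S := by_contra fun hx => by linarith [hSr x hx, dist_self x]
  refine hf.integrableOn.bdd_mul (c := c / r ^ d) ?_ ?_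
  · refine ((hK.continuousOn hδ x).mono ?_).aestronglyMeasurable hS.compl
    rintro y hy rfl
    exact hy hxS
  · refine ae_restrict_of_forall_mem hS.compl fun y hy => ?_
    have hry := hSr y hy
    calc ‖K x y‖ = |K x y| := Real.norm_eq_abs _
      _ ≤ c / dist x y ^ d := hK.abs_le x y (dist_pos.1 (hr.trans_le hry))
      _ ≤ c / r ^ d := div_le_div_of_nonneg_left hc (Real.rpow_pos_of_pos hr d)
          (Real.rpow_le_rpow hr.le hry hd)

end IsCZKernel

end Kernel

lemma apply_indicator_compl_eq_setIntegral {X : Type*} [TopologicalSpace X] [MeasurableSpace X]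
    {μ : Measure X} {K : X → X → ℝ} {T : (X → ℝ) → X → ℝ}
    (hrep : ∀ f, Integrable f μ → ∀ x ∉ tsupport f, T f x = ∫ y, K x y * f y ∂μ)
    {S : Set X} (hS : MeasurableSet S) {f : X → ℝ} (hf : Integrable f μ) {x : X}
    (hx : x ∈ interior S) : T (Sᶜ.indicator f) x = ∫ y in Sᶜ, K x y * f y ∂μ := by
  have hx' : x ∉ tsupport (Sᶜ.indicator f) := fun h => by
    have : x ∈ closure Sᶜ := closure_mono support_indicator_subset h
    rw [closure_compl] at this
    exact this hx
  rw [hrep _ (hf.indicator hS.compl) x hx', ← integral_indicator hS.compl]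
  simp only [indicator_mul_right]

lemma compl_eq_iUnion_diff_succ {α : Type*} {B : ℕ → Set α} (hB : Monotone B)
    (hcov : ⋃ k, B k = univ) : (B 0)ᶜ = ⋃ j, B (j + 1) \ B j := by
  ext y
  simp only [mem_compl_iff, mem_iUnion, Set.mem_sdiff]
  constructor
  · intro hy
    obtain ⟨k, hk⟩ := mem_iUnion.1 ((iUnion_disjointed (f := B)).trans hcov ▸ mem_univ y)
    cases k with
    | zero => exact absurd (disjointed_zero B ▸ hk) hy
    | succ j =>
      rw [← Order.succ_eq_add_one, hB.disjointed_succ (not_isMax j)] at hk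
      exact ⟨j, hk⟩
  · rintro ⟨j, -, hj⟩ hy
    exact hj (hB (Nat.zero_le j) hy)

lemma pairwise_disjoint_diff_succ {α : Type*} {B : ℕ → Set α} (hB : Monotone B) :
    Pairwise (Function.onFun Disjoint fun j => B (j + 1) \ B j) := by
  intro i j hij
  have h := disjoint_disjointed B (Nat.succ_injective.ne hij)
  rwa [Function.onFun, ← Nat.succ_eq_succ, hB.disjointed_succ (not_isMax _),
    hB.disjointed_succ (not_isMax _)] at h

lemma mul_rpow_div_rpow_add_le {c δ p d ρ D R : ℝ} (hc : 0 ≤ c) (hδ : 0 ≤ δ) (hp : 0 ≤ p)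
    (hd : 0 ≤ d) (hdρ : d ≤ ρ) (hR : 0 < R) (hRD : R ≤ D) :
    c * d ^ δ / D ^ (p + δ) ≤ c * (ρ / R) ^ δ / R ^ p := by
  have hρ : 0 ≤ ρ := hd.trans hdρ
  calc c * d ^ δ / D ^ (p + δ) ≤ c * ρ ^ δ / R ^ (p + δ) :=
        div_le_div₀ (mul_nonneg hc (Real.rpow_nonneg hρ δ)) (by gcongr) (by positivity)
          (by gcongr)
    _ = c * (ρ / R) ^ δ / R ^ p := by
      rw [Real.div_rpow (hd.trans hdρ) hR.le, Real.rpow_add hR]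
      field_simp

lemma measure_le_ofReal_of_ofReal_mul_le {α : Type*} [MeasurableSpace α] {μ : Measure α}
    {s : Set α} {t M τ : ℝ} (ht : 0 < t) (h : ENNReal.ofReal t * μ s ≤ ENNReal.ofReal M)
    (hM : M ≤ t * τ) : μ s ≤ ENNReal.ofReal τ := by
  rw [← ENNReal.mul_le_mul_iff_right (ENNReal.ofReal_pos.2 ht).ne' ofReal_ne_top,
    ← ENNReal.ofReal_mul ht.le]
  exact h.trans (ENNReal.ofReal_le_ofReal hM)

section Euclidean

variable {n : ℕ}

local notation "E" => EuclideanSpace ℝ (Fin n)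

lemma cubeC_eq_preimage (x₀ : E) (ℓ : ℝ) :
    cubeC x₀ ℓ = (MeasurableEquiv.toLp 2 (Fin n → ℝ)).symm ⁻¹'
      univ.pi fun i => Ico (x₀ i - ℓ / 2) (x₀ i + ℓ / 2) := by
  ext y
  simp only [cubeC, mem_preimage, mem_univ_pi, mem_Ico, mem_ofPred_eq]
  rfl

lemma measurableSet_cubeC (x₀ : E) (ℓ : ℝ) : MeasurableSet (cubeC x₀ ℓ) := by
  rw [cubeC_eq_preimage]
  exact (MeasurableEquiv.toLp 2 (Fin n → ℝ)).symm.measurable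
    (MeasurableSet.univ_pi fun _ => measurableSet_Ico)

lemma volume_cubeC (x₀ : E) {ℓ : ℝ} (hℓ : 0 ≤ ℓ) :
    (volume (cubeC x₀ ℓ)).toReal = ℓ ^ n := by
  rw [cubeC_eq_preimage, (EuclideanSpace.volume_preserving_symm_measurableEquiv_toLp
    (Fin n)).measure_preimage (MeasurableSet.univ_pi fun _ => measurableSet_Ico).nullMeasurableSet,
    volume_pi_pi]
  simp [Real.volume_Ico, hℓ]

lemma cubeC_mono (x₀ : E) {ℓ ℓ' : ℝ} (h : ℓ ≤ ℓ') : cubeC x₀ ℓ ⊆ cubeC x₀ ℓ' :=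
  fun _ hy i => ⟨by linarith [(hy i).1], by linarith [(hy i).2]⟩

lemma mem_cubeC_self (x₀ : E) {ℓ : ℝ} (hℓ : 0 < ℓ) : x₀ ∈ cubeC x₀ ℓ :=
  fun _ => ⟨by linarith, by linarith⟩

lemma monotone_cubeC_two_pow_mul (x₀ : E) {ℓ : ℝ} (hℓ : 0 ≤ ℓ) :
    Monotone fun m : ℕ => cubeC x₀ (2 ^ m * ℓ) := fun _ _ h =>
  cubeC_mono x₀ (mul_le_mul_of_nonneg_right (pow_le_pow_right₀ one_le_two h) hℓ)

lemma mem_cubeC_of_dist_lt {x₀ y : E} {ℓ : ℝ} (h : dist x₀ y < ℓ / 2) : y ∈ cubeC x₀ ℓ := by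
  intro i
  have := abs_lt.1 ((PiLp.dist_apply_le x₀ y i).trans_lt h)
  constructor <;> linarith [this.1, this.2]

lemma half_le_dist_of_notMem_cubeC {x₀ y : E} {ℓ : ℝ} (hy : y ∉ cubeC x₀ ℓ) :
    ℓ / 2 ≤ dist x₀ y :=
  not_lt.1 fun h => hy (mem_cubeC_of_dist_lt h)

lemma dist_lt_of_mem_cubeC {x₀ x : E} {ℓ : ℝ} (hℓ : 0 < ℓ) (hx : x ∈ cubeC x₀ ℓ) :
    dist x x₀ < 2 ^ n * ℓ / 2 := by
  have hcoord : ∀ i, dist (x i) (x₀ i) ^ 2 ≤ (ℓ / 2) ^ 2 := fun i => by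
    rw [Real.dist_eq, sq_abs]
    nlinarith [(hx i).1, (hx i).2]
  have hn : (n : ℝ) < (2 ^ n) ^ 2 := by
    have : (n : ℝ) < 2 ^ n := by exact_mod_cast Nat.lt_two_pow_self
    nlinarith [one_le_pow₀ (M₀ := ℝ) (n := n) one_le_two]
  refine lt_of_pow_lt_pow_left₀ 2 (by positivity) ?_
  calc dist x x₀ ^ 2 ≤ ∑ _i : Fin n, (ℓ / 2) ^ 2 :=
        (EuclideanSpace.dist_sq_eq x x₀).trans_le (Finset.sum_le_sum fun i _ => hcoord i)
    _ = n * (ℓ / 2) ^ 2 := by simp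
    _ < (2 ^ n) ^ 2 * (ℓ / 2) ^ 2 := by gcongr
    _ = (2 ^ n * ℓ / 2) ^ 2 := by ring

lemma cubeC_subset_interior (x₀ : E) {ℓ : ℝ} (hℓ : 0 < ℓ) {m : ℕ} (hm : n ≤ m) :
    cubeC x₀ ℓ ⊆ interior (cubeC x₀ (2 ^ m * ℓ)) := fun x hx =>
  interior_mono (fun _ hy => monotone_cubeC_two_pow_mul x₀ hℓ.le hm
      (mem_cubeC_of_dist_lt (Metric.mem_ball'.1 hy)))
    (by rw [Metric.isOpen_ball.interior_eq]; exact Metric.mem_ball.2 (dist_lt_of_mem_cubeC hℓ hx))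

lemma quarter_le_dist_of_mem_cubeC {x₀ x y : E} {ℓ : ℝ} {m : ℕ} (hℓ : 0 < ℓ) (hm : n + 2 ≤ m)
    (hx : x ∈ cubeC x₀ ℓ) (hy : y ∉ cubeC x₀ (2 ^ m * ℓ)) : 2 ^ m * ℓ / 4 ≤ dist x y := by
  have h4 : (2 : ℝ) ^ n * 4 ≤ 2 ^ m := by
    calc (2 : ℝ) ^ n * 4 = 2 ^ (n + 2) := by ring
      _ ≤ 2 ^ m := pow_le_pow_right₀ one_le_two hm
  have hx₀ := dist_lt_of_mem_cubeC hℓ hx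
  have hy₀ := half_le_dist_of_notMem_cubeC hy
  have htri := dist_triangle x₀ x y
  rw [dist_comm x₀ x] at htri
  have h4ℓ := mul_le_mul_of_nonneg_right h4 hℓ.le
  have hpos : 0 < (2 : ℝ) ^ m * ℓ := by positivity
  linarith

lemma iUnion_cubeC_eq_univ (x₀ : E) {ℓ : ℝ} (hℓ : 0 < ℓ) (m₀ : ℕ) :
    ⋃ k : ℕ, cubeC x₀ (2 ^ (m₀ + k) * ℓ) = univ := by
  refine eq_univ_of_forall fun y => mem_iUnion.2 ?_
  obtain ⟨k, hk⟩ := pow_unbounded_of_one_lt (2 * dist x₀ y / ℓ) one_lt_two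
  refine ⟨k, mem_cubeC_of_dist_lt ?_⟩
  rw [div_lt_iff₀ hℓ] at hk
  have : (2 : ℝ) ^ k ≤ 2 ^ (m₀ + k) := pow_le_pow_right₀ one_le_two (Nat.le_add_left k m₀)
  nlinarith

lemma rearr_nonneg (g : E → ℝ) (t : ℝ) : 0 ≤ rearr g t :=
  Real.sInf_nonneg fun _ hs => hs.1.le

lemma rearr_le_of_forall_lt {g : E → ℝ} {t r : ℝ} (hr : 0 ≤ r)
    (h : ∀ s, r < s → volume {x | s < |g x|} ≤ ENNReal.ofReal t) : rearr g t ≤ r :=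
  le_of_forall_pos_le_add fun ε hε =>
    csInf_le ⟨0, fun _ hs => hs.1.le⟩ ⟨by linarith, h _ (by linarith)⟩

lemma oscLam_le_of_ae_abs_sub_le {lam c₀ s₀ b : ℝ} {g h : E → ℝ} {Q : Set E} (hs₀ : 0 ≤ s₀)
    (hb : 0 ≤ b) (hdom : ∀ᵐ x, x ∈ Q → |g x - c₀| ≤ |h x| + b)
    (hlevel : ∀ t, s₀ < t → volume {x | t < |h x|} ≤ ENNReal.ofReal (lam * (volume Q).toReal)) :
    oscLam lam g Q ≤ s₀ + b := by
  refine (ciInf_le ⟨0, ?_⟩ c₀).trans (rearr_le_of_forall_lt (by positivity) fun s hs => ?_)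
  · rintro _ ⟨c, rfl⟩
    exact rearr_nonneg _ _
  refine (measure_mono_ae ?_).trans (hlevel (s - b) (by linarith))
  filter_upwards [hdom] with x hx (hxs : s < |Q.indicator (fun y => g y - c₀) x|)
  by_cases hxQ : x ∈ Q
  · rw [indicator_of_mem hxQ] at hxs
    show s - b < |h x|
    linarith [hx hxQ]
  · rw [indicator_of_notMem hxQ, abs_zero] at hxs
    linarith

noncomputable def dyadicAverageTerm (δ : ℝ) (f : E → ℝ) (x₀ : E) (ℓ : ℝ) (m : ℕ) : ℝ :=
  (2 : ℝ) ^ (-(m : ℝ) * δ) *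
    ((∫ y in cubeC x₀ (2 ^ m * ℓ), |f y|) / (volume (cubeC x₀ (2 ^ m * ℓ))).toReal)

section Dyadic

variable {δ ℓ : ℝ} {f : EuclideanSpace ℝ (Fin n) → ℝ} {x₀ : EuclideanSpace ℝ (Fin n)}

lemma dyadicAverageTerm_eq (hℓ : 0 ≤ ℓ) (m : ℕ) :
    dyadicAverageTerm δ f x₀ ℓ m =
      (2 : ℝ) ^ (-(m : ℝ) * δ) * ((∫ y in cubeC x₀ (2 ^ m * ℓ), |f y|) / (2 ^ m * ℓ) ^ n) := by
  rw [dyadicAverageTerm, volume_cubeC x₀ (by positivity)]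

lemma dyadicAverageTerm_nonneg (δ : ℝ) (f : E → ℝ) (x₀ : E) (ℓ : ℝ) (m : ℕ) :
    0 ≤ dyadicAverageTerm δ f x₀ ℓ m :=
  mul_nonneg (Real.rpow_nonneg zero_le_two _)
    (div_nonneg (integral_nonneg fun _ => abs_nonneg _) ENNReal.toReal_nonneg)

lemma summable_dyadicAverageTerm (hδ : 0 < δ) (hℓ : 0 < ℓ) (hf : Integrable f) :
    Summable (dyadicAverageTerm δ f x₀ ℓ) := by
  have hq : (2 : ℝ) ^ (-δ) < 1 := Real.rpow_lt_one_of_one_lt_of_neg one_lt_two (neg_lt_zero.2 hδ)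
  refine Summable.of_nonneg_of_le (dyadicAverageTerm_nonneg δ f x₀ ℓ) (fun m => ?_)
    ((summable_geometric_of_lt_one (by positivity) hq).mul_right ((∫ y, |f y|) / ℓ ^ n))
  have hgeom : (2 : ℝ) ^ (-(m : ℝ) * δ) = (2 ^ (-δ)) ^ m := by
    rw [← Real.rpow_natCast, ← Real.rpow_mul zero_le_two, neg_mul_comm, mul_comm]
  rw [dyadicAverageTerm_eq hℓ.le, hgeom]
  gcongr _ * (?_ / ?_)
  · exact setIntegral_le_integral hf.abs (Eventually.of_forall fun _ => abs_nonneg _)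
  · exact pow_le_pow_left₀ hℓ.le (le_mul_of_one_le_left hℓ.le (one_le_pow₀ one_le_two)) n

end Dyadic

lemma volume_lt_abs_apply_indicator_le {T : (E → ℝ) → E → ℝ} {A lam δ ℓ : ℝ} (hA : 0 ≤ A)
    (hlam : 0 < lam) (hℓ : 0 < ℓ)
    (hweak : ∀ f, Integrable f → ∀ t : ℝ, 0 < t →
      ENNReal.ofReal t * volume {x | t < |T f x|} ≤ ENNReal.ofReal (A * ∫ y, |f y|))
    {f : E → ℝ} (hf : Integrable f) (x₀ : E) (m : ℕ) {t : ℝ}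
    (ht : A / lam * 2 ^ ((m : ℝ) * δ) * (2 ^ m) ^ n * dyadicAverageTerm δ f x₀ ℓ m < t) :
    volume {x | t < |T ((cubeC x₀ (2 ^ m * ℓ)).indicator f) x|} ≤
      ENNReal.ofReal (lam * (volume (cubeC x₀ ℓ)).toReal) := by
  have hS := measurableSet_cubeC x₀ (2 ^ m * ℓ)
  have ht0 : 0 < t := lt_of_le_of_lt
    (mul_nonneg (by positivity) (dyadicAverageTerm_nonneg δ f x₀ ℓ m)) ht
  have hnorm : ∫ y, |(cubeC x₀ (2 ^ m * ℓ)).indicator f y| =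
      ∫ y in cubeC x₀ (2 ^ m * ℓ), |f y| := by
    simp only [← Real.norm_eq_abs, norm_indicator_eq_indicator_norm, integral_indicator hS]
  have hintegral : A * ∫ y in cubeC x₀ (2 ^ m * ℓ), |f y| =
      A / lam * 2 ^ ((m : ℝ) * δ) * (2 ^ m) ^ n * dyadicAverageTerm δ f x₀ ℓ m * (lam * ℓ ^ n) := by
    rw [dyadicAverageTerm_eq hℓ.le, mul_pow, neg_mul, Real.rpow_neg zero_le_two]
    field_simp
  refine measure_le_ofReal_of_ofReal_mul_le ht0 (hweak _ (hf.indicator hS) t ht0) ?_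
  rw [volume_cubeC x₀ hℓ.le, hnorm, hintegral]
  gcongr

namespace IsCZKernel

variable {c δ ℓ : ℝ} {K : EuclideanSpace ℝ (Fin n) → EuclideanSpace ℝ (Fin n) → ℝ}

lemma abs_sub_le_of_notMem_cubeC (hK : IsCZKernel n c δ K) (hc : 0 ≤ c) (hδ : 0 < δ)
    (hℓ : 0 < ℓ) {m : ℕ} (hm : n + 2 ≤ m)
    {x₀ x y : E} (hx : x ∈ cubeC x₀ ℓ) (hy : y ∉ cubeC x₀ (2 ^ m * ℓ)) :
    |K x y - K x₀ y| ≤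
      c * 2 ^ ((n + 2 : ℝ) * δ) * 8 ^ n *
        ((2 : ℝ) ^ (-((m + 1 : ℕ) : ℝ) * δ) / (2 ^ (m + 1) * ℓ) ^ n) := by
  have hx₀ := mem_cubeC_self x₀ hℓ
  have hxy := quarter_le_dist_of_mem_cubeC hℓ hm hx hy
  have hx₀y := quarter_le_dist_of_mem_cubeC hℓ hm hx₀ hy
  have hxx₀ := dist_lt_of_mem_cubeC hℓ hx
  have hpos : 0 < (2 : ℝ) ^ m * ℓ / 4 := by positivity
  have hnear : dist x x₀ < dist x y / 2 := by
    have : (2 : ℝ) ^ n * 4 ≤ 2 ^ m := by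
      calc (2 : ℝ) ^ n * 4 = 2 ^ (n + 2) := by ring
        _ ≤ 2 ^ m := pow_le_pow_right₀ one_le_two hm
    nlinarith
  have hsmooth := hK.abs_sub_add_abs_sub_le x x₀ y (dist_pos.1 (hpos.trans_le hxy))
    (dist_pos.1 (hpos.trans_le hx₀y)) hnear
  have hratio : (2 ^ n * ℓ / 2) / (2 ^ m * ℓ / 4) =
      (2 : ℝ) ^ (n + 2 : ℝ) * 2 ^ (-((m + 1 : ℕ) : ℝ)) := by
    rw [Real.rpow_neg zero_le_two, Real.rpow_natCast, show (n + 2 : ℝ) = ((n + 2 : ℕ) : ℝ) by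
      push_cast; ring, Real.rpow_natCast]
    field_simp
    ring
  calc |K x y - K x₀ y| ≤ c * dist x x₀ ^ δ / dist x y ^ ((n : ℝ) + δ) := by
        linarith [abs_nonneg (K y x - K y x₀)]
    _ ≤ c * ((2 ^ n * ℓ / 2) / (2 ^ m * ℓ / 4)) ^ δ / (2 ^ m * ℓ / 4) ^ (n : ℝ) :=
        mul_rpow_div_rpow_add_le hc hδ.le n.cast_nonneg dist_nonneg hxx₀.le hpos hxy
    _ = _ := by
      rw [hratio, Real.mul_rpow (by positivity) (by positivity), ← Real.rpow_mul zero_le_two,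
        ← Real.rpow_mul zero_le_two, Real.rpow_natCast,
        div_pow, show (8 : ℝ) ^ n = 4 ^ n * 2 ^ n by rw [← mul_pow]; norm_num]
      field_simp
      ring

lemma setIntegral_annulus_le (hK : IsCZKernel n c δ K) (hc : 0 ≤ c) (hδ : 0 < δ) (hℓ : 0 < ℓ)
    {f : E → ℝ} (hf : Integrable f) {m : ℕ} (hm : n + 2 ≤ m) {x₀ x : E} (hx : x ∈ cubeC x₀ ℓ) :
    ∫ y in cubeC x₀ (2 ^ (m + 1) * ℓ) \ cubeC x₀ (2 ^ m * ℓ), |K x y * f y - K x₀ y * f y| ≤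
      c * 2 ^ ((n + 2 : ℝ) * δ) * 8 ^ n * dyadicAverageTerm δ f x₀ ℓ (m + 1) := by
  set b := c * 2 ^ ((n + 2 : ℝ) * δ) * 8 ^ n *
    ((2 : ℝ) ^ (-((m + 1 : ℕ) : ℝ) * δ) / (2 ^ (m + 1) * ℓ) ^ n)
  have hb : 0 ≤ b := by positivity
  have hA := (measurableSet_cubeC x₀ (2 ^ (m + 1) * ℓ)).diff (measurableSet_cubeC x₀ (2 ^ m * ℓ))
  calc ∫ y in cubeC x₀ (2 ^ (m + 1) * ℓ) \ cubeC x₀ (2 ^ m * ℓ), |K x y * f y - K x₀ y * f y|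
      ≤ ∫ y in cubeC x₀ (2 ^ (m + 1) * ℓ) \ cubeC x₀ (2 ^ m * ℓ), b * |f y| := by
        refine integral_mono_of_nonneg (Eventually.of_forall fun _ => abs_nonneg _)
          (hf.abs.const_mul b).integrableOn (ae_restrict_of_forall_mem hA fun y hy => ?_)
        show |K x y * f y - K x₀ y * f y| ≤ b * |f y|
        rw [← sub_mul, abs_mul]
        exact mul_le_mul_of_nonneg_right
          (hK.abs_sub_le_of_notMem_cubeC hc hδ hℓ hm hx hy.2) (abs_nonneg _)
    _ = b * ∫ y in cubeC x₀ (2 ^ (m + 1) * ℓ) \ cubeC x₀ (2 ^ m * ℓ), |f y| :=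
        integral_const_mul b _
    _ ≤ b * ∫ y in cubeC x₀ (2 ^ (m + 1) * ℓ), |f y| :=
        mul_le_mul_of_nonneg_left (setIntegral_mono_set hf.abs.integrableOn
          (Eventually.of_forall fun _ => abs_nonneg _) sdiff_subset.eventuallyLE) hb
    _ = _ := by rw [dyadicAverageTerm_eq hℓ.le]; ring

theorem abs_apply_indicator_compl_sub_le (hK : IsCZKernel n c δ K) (hc : 0 ≤ c)
    (hδ : 0 < δ) {T : (E → ℝ) → E → ℝ}
    (hrep : ∀ f, Integrable f → ∀ x ∉ tsupport f, T f x = ∫ y, K x y * f y)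
    {f : E → ℝ} (hf : Integrable f) {x₀ x : E} (hℓ : 0 < ℓ) (hx : x ∈ cubeC x₀ ℓ) :
    |T ((cubeC x₀ (2 ^ (n + 2) * ℓ))ᶜ.indicator f) x -
        T ((cubeC x₀ (2 ^ (n + 2) * ℓ))ᶜ.indicator f) x₀| ≤
      c * 2 ^ ((n + 2 : ℝ) * δ) * 8 ^ n * ∑' m, dyadicAverageTerm δ f x₀ ℓ m := by
  set B : ℕ → Set E := fun k => cubeC x₀ (2 ^ (n + 2 + k) * ℓ)
  have hB : Monotone B :=
    (monotone_cubeC_two_pow_mul x₀ hℓ.le).comp fun _ _ h => Nat.add_le_add_left h _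
  have hBm : ∀ k, MeasurableSet (B k) := fun k => measurableSet_cubeC x₀ _
  have hx₀ := mem_cubeC_self x₀ hℓ
  have hint : ∀ z ∈ cubeC x₀ ℓ, IntegrableOn (fun y => K z y * f y) (B 0)ᶜ := fun z hz =>
    hK.integrableOn_compl_mul hc n.cast_nonneg hδ (hBm 0) (r := 2 ^ (n + 2) * ℓ / 4)
      (by positivity) (fun y hy => quarter_le_dist_of_mem_cubeC hℓ le_rfl hz hy) hf
  have hinterior : cubeC x₀ ℓ ⊆ interior (B 0) := cubeC_subset_interior x₀ hℓ (by omega)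
  have hcover := compl_eq_iUnion_diff_succ hB (iUnion_cubeC_eq_univ x₀ hℓ (n + 2))
  have hsum := summable_dyadicAverageTerm (x₀ := x₀) hδ hℓ hf
  have hshift : Function.Injective fun j => n + 2 + j + 1 := fun i j h => by simpa using h
  change |T ((B 0)ᶜ.indicator f) x - T ((B 0)ᶜ.indicator f) x₀| ≤ _
  rw [apply_indicator_compl_eq_setIntegral hrep (hBm 0) hf (hinterior hx),
    apply_indicator_compl_eq_setIntegral hrep (hBm 0) hf (hinterior hx₀),
    ← integral_sub (hint x hx) (hint x₀ hx₀)]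
  have hφ := ((hint x hx).sub (hint x₀ hx₀)).abs
  rw [hcover] at hφ ⊢
  calc |∫ y in ⋃ j, B (j + 1) \ B j, (K x y * f y - K x₀ y * f y)|
      ≤ ∫ y in ⋃ j, B (j + 1) \ B j, |K x y * f y - K x₀ y * f y| :=
        abs_integral_le_integral_abs
    _ = ∑' j, ∫ y in B (j + 1) \ B j, |K x y * f y - K x₀ y * f y| :=
        integral_iUnion (fun j => (hBm _).diff (hBm _)) (pairwise_disjoint_diff_succ hB) hφ
    _ ≤ ∑' j, c * 2 ^ ((n + 2 : ℝ) * δ) * 8 ^ n * dyadicAverageTerm δ f x₀ ℓ (n + 2 + j + 1) :=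
        Summable.tsum_le_tsum
          (fun j => hK.setIntegral_annulus_le hc hδ hℓ hf (Nat.le_add_right _ j) hx)
          (hasSum_integral_iUnion (fun j => (hBm _).diff (hBm _))
            (pairwise_disjoint_diff_succ hB) hφ).summable
          ((hsum.comp_injective hshift).mul_left _)
    _ ≤ c * 2 ^ ((n + 2 : ℝ) * δ) * 8 ^ n * ∑' m, dyadicAverageTerm δ f x₀ ℓ m := by
        rw [tsum_mul_left]
        exact mul_le_mul_of_nonneg_left
          (tsum_comp_le_tsum_of_inj hsum (dyadicAverageTerm_nonneg δ f x₀ ℓ) hshift)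
          (by positivity)

end IsCZKernel

end Euclidean

theorem stmt12_general (n : ℕ) (c δ A lam : ℝ) (hc : 0 < c) (hδ : 0 < δ)
    (hA : 0 < A) (hlam0 : 0 < lam)
    (K : EuclideanSpace ℝ (Fin n) → EuclideanSpace ℝ (Fin n) → ℝ)
    (T : (EuclideanSpace ℝ (Fin n) → ℝ) → (EuclideanSpace ℝ (Fin n) → ℝ))
    (hsize : ∀ x y, x ≠ y → |K x y| ≤ c / dist x y ^ (n : ℝ))
    (hsmooth : ∀ x x' y, x ≠ y → x' ≠ y → dist x x' < dist x y / 2 →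
      |K x y - K x' y| + |K y x - K y x'| ≤ c * dist x x' ^ δ / dist x y ^ ((n : ℝ) + δ))
    (hrep : ∀ f, Integrable f → ∀ x ∉ tsupport f, T f x = ∫ y, K x y * f y)
    (hadd : ∀ f g, Integrable f → Integrable g →
      ∀ᵐ x ∂volume, T (f + g) x = T f x + T g x)
    (hweak : ∀ f, Integrable f → ∀ t : ℝ, 0 < t →
      ENNReal.ofReal t * volume {x | t < |T f x|} ≤ ENNReal.ofReal (A * ∫ y, |f y|)) :
    ∃ C : ℝ, 0 < C ∧
      ∀ f, Integrable f → ∀ (x₀ : EuclideanSpace ℝ (Fin n)) (ℓ : ℝ), 0 < ℓ →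
        oscLam lam (T f) (cubeC x₀ ℓ) ≤
          C * ∑' m : ℕ, (2:ℝ)^(-(m:ℝ)*δ) *
            ((∫ y in cubeC x₀ (2^m * ℓ), |f y|) / (volume (cubeC x₀ (2^m * ℓ))).toReal) := by
  have hK : IsCZKernel n c δ K := ⟨hsize, hsmooth⟩
  set C₁ := A / lam * 2 ^ (((n + 2 : ℕ) : ℝ) * δ) * (2 ^ (n + 2)) ^ n
  set C₂ := c * 2 ^ ((n + 2 : ℝ) * δ) * 8 ^ n
  refine ⟨C₁ + C₂, by positivity, fun f hf x₀ ℓ hℓ => ?_⟩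
  set S := cubeC x₀ (2 ^ (n + 2) * ℓ)
  have hS : MeasurableSet S := measurableSet_cubeC x₀ _
  have hterm := dyadicAverageTerm_nonneg δ f x₀ ℓ
  have hdom : ∀ᵐ x, x ∈ cubeC x₀ ℓ → |T f x - T (Sᶜ.indicator f) x₀| ≤
      |T (S.indicator f) x| + C₂ * ∑' m, dyadicAverageTerm δ f x₀ ℓ m := by
    filter_upwards [hadd _ _ (hf.indicator hS) (hf.indicator hS.compl)] with x hx hxQ
    rw [indicator_self_add_compl] at hx
    rw [hx, add_sub_assoc]
    exact (abs_add_le _ _).trans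
      (add_le_add_right (hK.abs_apply_indicator_compl_sub_le hc.le hδ hrep hf hℓ hxQ) _)
  calc oscLam lam (T f) (cubeC x₀ ℓ)
      ≤ C₁ * dyadicAverageTerm δ f x₀ ℓ (n + 2) + C₂ * ∑' m, dyadicAverageTerm δ f x₀ ℓ m :=
        oscLam_le_of_ae_abs_sub_le (mul_nonneg (by positivity) (hterm _))
          (mul_nonneg (by positivity) (tsum_nonneg hterm)) hdom
          fun t ht => volume_lt_abs_apply_indicator_le hA.le hlam0 hℓ hweak hf x₀ (n + 2) ht
    _ ≤ (C₁ + C₂) * ∑' m, dyadicAverageTerm δ f x₀ ℓ m := by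
        rw [add_mul]
        gcongr
        exact (summable_dyadicAverageTerm hδ hℓ hf).le_tsum _ fun m _ => hterm m

/-- Let `T` be an `L²`-bounded Calderón–Zygmund operator, hence of weak type `(1,1)`. Then for
every cube `Q` and `0 < λ < 1`,
`ω_λ(Tf; Q) ≤ C(T,λ,n) Σ_{m≥0} 2^{-mδ}(1/|2^m Q|)∫_{2^m Q}|f|`. -/
theorem stmt12 (n : ℕ) (c δ A lam : ℝ) (hc : 0 < c) (hδ : 0 < δ) (hδ1 : δ ≤ 1)
    (hA : 0 < A) (hlam0 : 0 < lam) (hlam1 : lam < 1)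
    (K : EuclideanSpace ℝ (Fin n) → EuclideanSpace ℝ (Fin n) → ℝ)
    (T : (EuclideanSpace ℝ (Fin n) → ℝ) → (EuclideanSpace ℝ (Fin n) → ℝ))
    (hsize : ∀ x y, x ≠ y → |K x y| ≤ c / dist x y ^ (n : ℝ))
    (hsmooth : ∀ x x' y, x ≠ y → x' ≠ y → dist x x' < dist x y / 2 →
      |K x y - K x' y| + |K y x - K y x'| ≤ c * dist x x' ^ δ / dist x y ^ ((n : ℝ) + δ))
    (hrep : ∀ f, Integrable f → ∀ x ∉ tsupport f, T f x = ∫ y, K x y * f y)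
    (hadd : ∀ f g, Integrable f → Integrable g →
      ∀ᵐ x ∂volume, T (f + g) x = T f x + T g x)
    (hL2 : ∀ f, MemLp f 2 volume → eLpNorm (T f) 2 volume ≤
      ENNReal.ofReal A * eLpNorm f 2 volume)
    (hweak : ∀ f, Integrable f → ∀ t : ℝ, 0 < t →
      ENNReal.ofReal t * volume {x | t < |T f x|} ≤ ENNReal.ofReal (A * ∫ y, |f y|)) :
    ∃ C : ℝ, 0 < C ∧
      ∀ f, Integrable f → ∀ (x₀ : EuclideanSpace ℝ (Fin n)) (ℓ : ℝ), 0 < ℓ →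
        oscLam lam (T f) (cubeC x₀ ℓ) ≤
          C * ∑' m : ℕ, (2:ℝ)^(-(m:ℝ)*δ) *
            ((∫ y in cubeC x₀ (2^m * ℓ), |f y|) / (volume (cubeC x₀ (2^m * ℓ))).toReal) :=
  stmt12_general n c δ A lam hc hδ hA hlam0 K T hsize hsmooth hrep hadd hweak
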